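/- arXiv:2503.00891 — 2 statements merged into one kernel-verified Lean document; each statement's English description precedes it below -/
import Mathlib

section
/- Let α ∈ (0, π/2), Δ = Δ(α) and let {T_t}_{t∈Δ} be a C₀-semigroup on a Banach space X. Then the distributionally proximal relation DProx(T) = {(x, y) ∈ X × X : for every ε > 0, udens({t ∈ Δ : ‖T_t x − T_t y‖ < ε}) = 1} is a Gδ subset of X × X. -/
open MeasureTheory Filter Set

noncomputable section

/-- The complex sector `Δ(α) = {r e^{iθ} : r ≥ 0, |θ| ≤ α}`. -/
def sector (α : ℝ) : Set ℂ := {z : ℂ | |Complex.arg z| ≤ α}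

/-- `Δ_r = {t ∈ Δ(α) : |t| < r}`. -/
def sectorBall (α r : ℝ) : Set ℂ := {z ∈ sector α | ‖z‖ < r}

/-- Upper density of a set `A` with respect to the sector `Δ(α)`. -/
def udens (α : ℝ) (A : Set ℂ) : ℝ :=
  limsup (fun r : ℝ =>
    (volume (A ∩ sectorBall α r)).toReal / (volume (sectorBall α r)).toReal) atTop

/-- Lower density of a set `A` with respect to the sector `Δ(α)`. -/
def ldens (α : ℝ) (A : Set ℂ) : ℝ :=
  liminf (fun r : ℝ =>
    (volume (A ∩ sectorBall α r)).toReal / (volume (sectorBall α r)).toReal) atTop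

/-- The filter expressing `|t| → ∞` along `t ∈ A`. -/
def alongAbs (A : Set ℂ) : Filter ℂ :=
  (atTop.comap (fun z : ℂ => ‖z‖)) ⊓ 𝓟 A

/-- A `C₀`-semigroup of continuous linear operators indexed by the sector `Δ(α)`. -/
structure CZeroSemigroup (α : ℝ) (𝕜 X : Type*) [NontriviallyNormedField 𝕜]
    [NormedAddCommGroup X] [NormedSpace 𝕜 X] where
  T : ℂ → X →L[𝕜] X
  map_zero' : T 0 = ContinuousLinearMap.id 𝕜 X
  map_add' : ∀ s ∈ sector α, ∀ t ∈ sector α, T (s + t) = (T s).comp (T t)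
  cont' : ∀ x : X, ContinuousOn (fun t => T t x) (sector α)

variable {α : ℝ} {𝕜 X : Type*} [NontriviallyNormedField 𝕜]
  [NormedAddCommGroup X] [NormedSpace 𝕜 X]

/-- Distributional sensitivity. -/
def DistSensitive (S : CZeroSemigroup α 𝕜 X) : Prop :=
  ∃ δ > (0:ℝ), ∀ x : X, ∀ ε > (0:ℝ), ∃ y : X, ‖x - y‖ < ε ∧
    udens α {t ∈ sector α | δ < ‖S.T t x - S.T t y‖} = 1

/-- Distributionally unbounded vector. -/
def DistUnbounded (S : CZeroSemigroup α 𝕜 X) (x : X) : Prop :=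
  ∃ A : Set ℂ, A ⊆ sector α ∧ MeasurableSet A ∧ udens α A = 1 ∧
    Tendsto (fun t => ‖S.T t x‖) (alongAbs A) atTop

/-- Distributionally semi-irregular vector. -/
def DistSemiIrregular (S : CZeroSemigroup α 𝕜 X) (x : X) : Prop :=
  ∃ A B : Set ℂ, A ⊆ sector α ∧ B ⊆ sector α ∧ MeasurableSet A ∧ MeasurableSet B ∧
    udens α A = 1 ∧ udens α B = 1 ∧
    Tendsto (fun t => ‖S.T t x‖) (alongAbs A) (nhds 0) ∧
    ∃ δ > (0:ℝ), ∀ t ∈ B, δ ≤ ‖S.T t x‖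

/-- Distributionally irregular vector. -/
def DistIrregular (S : CZeroSemigroup α 𝕜 X) (x : X) : Prop :=
  ∃ A B : Set ℂ, A ⊆ sector α ∧ B ⊆ sector α ∧ MeasurableSet A ∧ MeasurableSet B ∧
    udens α A = 1 ∧ udens α B = 1 ∧
    Tendsto (fun t => ‖S.T t x‖) (alongAbs A) (nhds 0) ∧
    Tendsto (fun t => ‖S.T t x‖) (alongAbs B) atTop

/-- Distributionally chaotic pair. -/
def DistChaoticPair (S : CZeroSemigroup α 𝕜 X) (x y : X) : Prop :=
  ∃ δ > (0:ℝ), ∀ ε > (0:ℝ),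
    udens α {t ∈ sector α | ‖S.T t x - S.T t y‖ < ε} = 1 ∧
    udens α {t ∈ sector α | δ < ‖S.T t x - S.T t y‖} = 1

/-- Distributionally scrambled set. -/
def DistScrambled (S : CZeroSemigroup α 𝕜 X) (K : Set X) : Prop :=
  ∀ x ∈ K, ∀ y ∈ K, x ≠ y → DistChaoticPair S x y

/-!
For fixed `ε` and `r`, the measure of `{t ∈ Δ_r : f t p < ε}` is lower semicontinuous in `p`:
every `t` in this set stays in it for all `p'` near `p`, so along a sequence `pₙ → p` the set
is contained in the set-theoretic `liminf`, and continuity from below, which holds for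
arbitrary (not necessarily measurable) sets, gives Fatou's inequality for these sets.
Hence `{p | ∃ᶠ r in atTop, c < density ratio}` is a `Gδ`, and `udens = 1` for every `ε > 0`
unfolds to countably many such conditions (`ε = 1/(m+1)`, `c = 1 - 1/(k+1)`).
-/

open scoped Topology ENNReal

theorem MeasureTheory.measure_liminf_le_liminf_measure {β : Type*} [MeasurableSpace β]
    (μ : Measure β) (s : ℕ → Set β) :
    μ (liminf s atTop) ≤ liminf (fun n => μ (s n)) atTop := by
  have hmono : Monotone fun n => ⋂ i ≥ n, s i :=
    fun m n hmn => biInter_mono (fun i (hi : n ≤ i) => hmn.trans hi) fun _ _ => subset_rfl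
  rw [liminf_eq_iSup_iInf_of_nat, liminf_eq_iSup_iInf_of_nat]
  simp only [iSup_eq_iUnion, iInf_eq_iInter]
  rw [hmono.measure_iUnion]
  exact iSup_mono fun n => le_iInf₂ fun i hi => measure_mono (biInter_subset_of_mem hi)

section Semicontinuity

variable {P β : Type*} [TopologicalSpace P] [MeasurableSpace β] {s : P → Set β}

theorem MeasureTheory.measure_le_liminf_of_tendsto (μ : Measure β)
    (hs : ∀ b, IsOpen {p | b ∈ s p}) {u : ℕ → P} {p : P} (hu : Tendsto u atTop (𝓝 p)) :
    μ (s p) ≤ liminf (fun n => μ (s (u n))) atTop := by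
  refine (measure_mono fun b hb => ?_).trans (measure_liminf_le_liminf_measure μ (s ∘ u))
  exact mem_liminf_iff_eventually_mem.mpr (hu.eventually ((hs b).mem_nhds hb))

theorem MeasureTheory.lowerSemicontinuous_measure [FirstCountableTopology P] (μ : Measure β)
    (hs : ∀ b, IsOpen {p | b ∈ s p}) : LowerSemicontinuous fun p => μ (s p) := by
  refine lowerSemicontinuous_iff_isClosed_preimage.mpr fun c => IsSeqClosed.isClosed ?_
  intro u p hu hup
  show μ (s p) ≤ c
  calc μ (s p) ≤ liminf (fun n => μ (s (u n))) atTop := measure_le_liminf_of_tendsto μ hs hup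
    _ ≤ c := liminf_le_of_frequently_le' (Frequently.of_forall hu)

theorem LowerSemicontinuous.ennreal_toReal {f : P → ℝ≥0∞} (hf : LowerSemicontinuous f)
    (hfin : ∀ p, f p ≠ ⊤) : LowerSemicontinuous fun p => (f p).toReal := by
  intro p c hc
  rcases lt_or_ge c 0 with hneg | hnonneg
  · exact Eventually.of_forall fun q => hneg.trans_le ENNReal.toReal_nonneg
  · filter_upwards [hf p _ ((ENNReal.ofReal_lt_iff_lt_toReal hnonneg (hfin p)).mpr hc)] with q hq
    exact (ENNReal.ofReal_lt_iff_lt_toReal hnonneg (hfin q)).mp hq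

end Semicontinuity

theorem IsGδ.setOf_frequently {P ι : Type*} [TopologicalSpace P] {l : Filter ι}
    [l.IsCountablyGenerated] {U : ι → Set P} (hU : ∀ i, IsOpen (U i)) :
    IsGδ {p | ∃ᶠ i in l, p ∈ U i} := by
  obtain ⟨V, hV⟩ := l.exists_antitone_basis
  have : {p | ∃ᶠ i in l, p ∈ U i} = ⋂ n, ⋃ i ∈ V n, U i := by
    ext p
    simp [hV.frequently_iff]
  rw [this]
  exact .iInter fun n => (isOpen_biUnion fun i _ => hU i).isGδ

theorem measure_sectorBall_ne_top (α r : ℝ) : volume (sectorBall α r) ≠ ⊤ :=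
  ne_top_of_le_ne_top (measure_ball_lt_top (x := 0) (r := r)).ne <| measure_mono fun z hz => by
    simpa [Complex.dist_eq] using hz.2

def densityRatio (α : ℝ) (A : Set ℂ) (r : ℝ) : ℝ :=
  (volume (A ∩ sectorBall α r)).toReal / (volume (sectorBall α r)).toReal

theorem udens_eq_limsup_densityRatio (α : ℝ) (A : Set ℂ) :
    udens α A = limsup (densityRatio α A) atTop := rfl

theorem densityRatio_nonneg (α : ℝ) (A : Set ℂ) (r : ℝ) : 0 ≤ densityRatio α A r := by
  unfold densityRatio; positivity

theorem densityRatio_mono (α : ℝ) {A B : Set ℂ} (h : A ⊆ B) (r : ℝ) :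
    densityRatio α A r ≤ densityRatio α B r :=
  div_le_div_of_nonneg_right (ENNReal.toReal_mono
    (ne_top_of_le_ne_top (measure_sectorBall_ne_top α r) (measure_mono inter_subset_right))
    (measure_mono (inter_subset_inter_left _ h))) ENNReal.toReal_nonneg

theorem densityRatio_le_one (α : ℝ) (A : Set ℂ) (r : ℝ) : densityRatio α A r ≤ 1 := by
  refine (densityRatio_mono α (subset_univ A) r).trans ?_
  rw [densityRatio, univ_inter]
  exact div_self_le_one _

theorem udens_eq_one_iff (α : ℝ) (A : Set ℂ) :
    udens α A = 1 ↔ ∀ c < 1, ∃ᶠ r in atTop, c < densityRatio α A r := by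
  have hbdd : IsBoundedUnder (· ≤ ·) atTop (densityRatio α A) :=
    isBoundedUnder_of ⟨1, densityRatio_le_one α A⟩
  have hcobdd : IsCoboundedUnder (· ≤ ·) atTop (densityRatio α A) :=
    isCoboundedUnder_le_of_le atTop (densityRatio_nonneg α A)
  rw [udens_eq_limsup_densityRatio, ← le_limsup_iff hcobdd hbdd]
  exact ⟨ge_of_eq, fun h => le_antisymm
    (limsup_le_of_le hcobdd (Eventually.of_forall (densityRatio_le_one α A))) h⟩

theorem lowerSemicontinuous_densityRatio {P : Type*} [TopologicalSpace P]
    [FirstCountableTopology P] (α : ℝ) {s : P → Set ℂ} (hs : ∀ t, IsOpen {p | t ∈ s p})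
    (r : ℝ) : LowerSemicontinuous fun p => densityRatio α (s p) r := by
  have hmeas : LowerSemicontinuous fun p => (volume (s p ∩ sectorBall α r)).toReal :=
    (lowerSemicontinuous_measure volume fun t => (hs t).inter isOpen_const).ennreal_toReal
      fun p => ne_top_of_le_ne_top (measure_sectorBall_ne_top α r)
        (measure_mono inter_subset_right)
  exact (continuous_id.div_const _).comp_lowerSemicontinuous hmeas
    fun a b hab => div_le_div_of_nonneg_right hab ENNReal.toReal_nonneg

theorem forall_udens_eq_one_iff (α : ℝ) {s : ℝ → Set ℂ} (hs : Monotone s) :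
    (∀ ε > 0, udens α (s ε) = 1) ↔
      ∀ m k : ℕ, ∃ᶠ r in atTop, 1 - 1 / (k + 1 : ℝ) < densityRatio α (s (1 / (m + 1))) r := by
  refine ⟨fun h m k => (udens_eq_one_iff α _).mp (h _ Nat.one_div_pos_of_nat) _
    (sub_lt_self 1 Nat.one_div_pos_of_nat), fun h ε hε => ?_⟩
  refine (udens_eq_one_iff α _).mpr fun c hc => ?_
  obtain ⟨m, hm⟩ := exists_nat_one_div_lt hε
  obtain ⟨k, hk⟩ := exists_nat_one_div_lt (sub_pos.mpr hc)
  exact (h m k).mono fun r hr =>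
    (lt_sub_comm.mp hk).trans (hr.trans_le (densityRatio_mono α (hs hm.le) r))

theorem isGδ_setOf_forall_udens_eq_one {P : Type*} [TopologicalSpace P]
    [FirstCountableTopology P] (α : ℝ) {f : ℂ → P → ℝ} (hf : ∀ t, UpperSemicontinuous (f t)) :
    IsGδ {p | ∀ ε > 0, udens α {t ∈ sector α | f t p < ε} = 1} := by
  have hmono (p : P) : Monotone fun ε => {t ∈ sector α | f t p < ε} :=
    fun _ _ hε _ ht => ⟨ht.1, ht.2.trans_le hε⟩
  simp only [forall_udens_eq_one_iff α (hmono _), ofPred_forall]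
  refine .iInter fun m => .iInter fun k => .setOf_frequently fun r =>
    (lowerSemicontinuous_densityRatio α (fun t => ?_) r).isOpen_preimage _
  exact isOpen_const.inter ((hf t).isOpen_preimage _)

theorem stmt_3_general (α : ℝ)
    {𝕜 X : Type*} [NontriviallyNormedField 𝕜] [NormedAddCommGroup X] [NormedSpace 𝕜 X]
    (S : CZeroSemigroup α 𝕜 X) :
    IsGδ {p : X × X | ∀ ε > (0:ℝ),
      udens α {t ∈ sector α | ‖S.T t p.1 - S.T t p.2‖ < ε} = 1} :=
  isGδ_setOf_forall_udens_eq_one α fun t => Continuous.upperSemicontinuous (by fun_prop)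

/-- The distributionally proximal relation is a `Gδ` subset of `X × X`. -/
theorem stmt_3 (α : ℝ) (hα : 0 < α) (hα' : α < Real.pi / 2)
    {𝕜 X : Type*} [NontriviallyNormedField 𝕜] [NormedAddCommGroup X] [NormedSpace 𝕜 X]
    [CompleteSpace X] (S : CZeroSemigroup α 𝕜 X) :
    IsGδ {p : X × X | ∀ ε > (0:ℝ),
      udens α {t ∈ sector α | ‖S.T t p.1 - S.T t p.2‖ < ε} = 1} :=
  stmt_3_general α S
end
end

section
/- Let α ∈ (0, π/2), Δ = Δ(α) and let {T_t}_{t∈Δ} be a C₀-semigroup on a Banach space X. If x₀ ∈ X is a distributionally irregular vector, then for every t₀ ∈ Δ the vector T_{t₀} x₀ is also distributionally irregular; that is, the set of distributionally irregular vectors is invariant under every operator of the semigroup. -/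
open MeasureTheory Filter Set

noncomputable section

variable {α : ℝ} {𝕜 X : Type*} [NontriviallyNormedField 𝕜]
  [NormedAddCommGroup X] [NormedSpace 𝕜 X]

/-!
The semigroup commutes on the sector, so `‖T_t T_{t₀} x₀‖ ≤ ‖T_{t₀}‖ ‖T_t x₀‖` and the set `A` on
which `T_t x₀ → 0` still works for `T_{t₀} x₀`. Since `T_s T_{t₀} x₀ = T_{s + t₀} x₀`, the orbit of
`T_{t₀} x₀` diverges along `B' = {s ∈ Δ : s + t₀ ∈ B}`. For `α ≤ π/2` the sector is a convex cone,
so `t₀ + Δ_r ⊆ Δ_{r + |t₀|}`; as `μ(Δ_r)` scales like `r²`, this gives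
`dens_B(r + |t₀|) ≤ dens_{B'}(r) + 1 - (r / (r + |t₀|))²`, and the error term vanishes as `r → ∞`.
-/
open Pointwise Topology

theorem mem_sector_iff_norm_mul_cos_le_re (h₀ : 0 ≤ α) (hπ : α ≤ Real.pi) {z : ℂ} :
    z ∈ sector α ↔ ‖z‖ * Real.cos α ≤ z.re := by
  rcases eq_or_ne z 0 with rfl | hz
  · simp [sector, h₀]
  rw [sector, mem_ofPred_eq, ← Complex.norm_mul_cos_arg z,
    mul_le_mul_iff_right₀ (norm_pos_iff.2 hz), ← Real.cos_abs (Complex.arg z)]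
  exact (Real.strictAntiOn_cos.le_iff_ge ⟨h₀, hπ⟩ ⟨abs_nonneg _, Complex.abs_arg_le_pi z⟩).symm

theorem nonneg_of_mem_sector {z : ℂ} (hz : z ∈ sector α) : 0 ≤ α :=
  (abs_nonneg _).trans hz

theorem add_mem_sector (hα : α ≤ Real.pi / 2) {z w : ℂ}
    (hz : z ∈ sector α) (hw : w ∈ sector α) : z + w ∈ sector α := by
  have h₀ : 0 ≤ α := nonneg_of_mem_sector hz
  have hπ : α ≤ Real.pi := hα.trans (by linarith [Real.pi_pos])
  have hcos : 0 ≤ Real.cos α := Real.cos_nonneg_of_mem_Icc ⟨by linarith, hα⟩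
  rw [mem_sector_iff_norm_mul_cos_le_re h₀ hπ] at *
  calc ‖z + w‖ * Real.cos α ≤ (‖z‖ + ‖w‖) * Real.cos α := by gcongr; exact norm_add_le z w
    _ ≤ (z + w).re := by rw [add_mul, Complex.add_re]; exact add_le_add hz hw

theorem measurableSet_sector (α : ℝ) : MeasurableSet (sector α) :=
  Complex.measurable_arg.abs measurableSet_Iic

theorem measurableSet_sectorBall (α r : ℝ) : MeasurableSet (sectorBall α r) :=
  (measurableSet_sector α).inter (continuous_norm.measurable measurableSet_Iio)

theorem sectorBall_mono (α : ℝ) {r s : ℝ} (h : r ≤ s) : sectorBall α r ⊆ sectorBall α s :=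
  fun _ hz => ⟨hz.1, hz.2.trans_le h⟩

theorem sectorBall_eq_smul (α : ℝ) {r : ℝ} (hr : 0 < r) : sectorBall α r = r • sectorBall α 1 := by
  ext z
  rw [Set.mem_smul_set_iff_inv_smul_mem₀ hr.ne']
  simp only [sectorBall, sector, mem_ofPred_eq, Complex.real_smul, norm_mul,
    Complex.norm_real, Real.norm_eq_abs, Complex.arg_real_mul _ (inv_pos.2 hr),
    abs_of_pos (inv_pos.2 hr), inv_mul_lt_one₀ hr]

theorem volume_sectorBall (α : ℝ) {r : ℝ} (hr : 0 < r) :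
    volume (sectorBall α r) = ENNReal.ofReal (r ^ 2) * volume (sectorBall α 1) := by
  rw [sectorBall_eq_smul α hr, Measure.addHaar_smul, Complex.finrank_real_complex,
    abs_of_nonneg (by positivity : (0:ℝ) ≤ r ^ 2)]

theorem volume_sectorBall_lt_top (α r : ℝ) : volume (sectorBall α r) < ⊤ :=
  (measure_mono fun z hz => by simpa using hz.2).trans_lt
    (measure_ball_lt_top (x := (0 : ℂ)) (r := r))

theorem volume_inter_sectorBall_le (hα : α ≤ Real.pi / 2) {t₀ : ℂ} (ht₀ : t₀ ∈ sector α)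
    (B : Set ℂ) (r : ℝ) :
    volume (B ∩ sectorBall α (r + ‖t₀‖)) ≤
      volume ((· + t₀) ⁻¹' B ∩ sector α ∩ sectorBall α r) +
        (volume (sectorBall α (r + ‖t₀‖)) - volume (sectorBall α r)) := by
  set S := (· + -t₀) ⁻¹' sectorBall α r
  have hS : S ⊆ sectorBall α (r + ‖t₀‖) := fun z hz => by
    refine ⟨by simpa using add_mem_sector hα hz.1 ht₀, ?_⟩
    calc ‖z‖ = ‖(z + -t₀) + t₀‖ := by rw [neg_add_cancel_right]
      _ ≤ ‖z + -t₀‖ + ‖t₀‖ := norm_add_le _ _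
      _ < r + ‖t₀‖ := by linarith [hz.2]
  have hvolS : volume S = volume (sectorBall α r) := measure_preimage_add_right _ _ _
  have htranslate : (· + t₀) ⁻¹' B ∩ sector α ∩ sectorBall α r = (· + t₀) ⁻¹' (B ∩ S) := by
    ext z
    simp only [S, mem_inter_iff, mem_preimage, add_neg_cancel_right]
    exact ⟨fun h => ⟨h.1.1, h.2⟩, fun h => ⟨⟨h.1, h.2.1⟩, h.2⟩⟩
  calc volume (B ∩ sectorBall α (r + ‖t₀‖))
      ≤ volume (B ∩ sectorBall α (r + ‖t₀‖) ∩ S) + volume ((B ∩ sectorBall α (r + ‖t₀‖)) \ S) :=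
        measure_le_inter_add_sdiff _ _ _
    _ ≤ volume (B ∩ S) + volume (sectorBall α (r + ‖t₀‖) \ S) :=
        add_le_add (measure_mono fun z hz => ⟨hz.1.1, hz.2⟩)
          (measure_mono fun z hz => ⟨hz.1.2, hz.2⟩)
    _ = _ := by
        rw [htranslate, measure_preimage_add_right, measure_sdiff hS
          ((measurableSet_sectorBall α r).preimage (measurable_add_const _)).nullMeasurableSet
          (hvolS ▸ (volume_sectorBall_lt_top α r).ne), hvolS]

def sectorDensity (α : ℝ) (A : Set ℂ) (r : ℝ) : ℝ :=
  (volume (A ∩ sectorBall α r)).toReal / (volume (sectorBall α r)).toReal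

theorem sectorDensity_nonneg (A : Set ℂ) (r : ℝ) : 0 ≤ sectorDensity α A r := by
  unfold sectorDensity; positivity

theorem sectorDensity_le_one (A : Set ℂ) (r : ℝ) : sectorDensity α A r ≤ 1 :=
  div_le_one_of_le₀ (ENNReal.toReal_mono (volume_sectorBall_lt_top α r).ne
    (measure_mono inter_subset_right)) ENNReal.toReal_nonneg

theorem udens_le_one (A : Set ℂ) : udens α A ≤ 1 :=
  limsup_le_of_le (isCoboundedUnder_le_of_le atTop (sectorDensity_nonneg A))
    (Eventually.of_forall (sectorDensity_le_one A))

theorem toReal_volume_sectorBall (α : ℝ) {r : ℝ} (hr : 0 < r) :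
    (volume (sectorBall α r)).toReal = r ^ 2 * (volume (sectorBall α 1)).toReal := by
  rw [volume_sectorBall α hr, ENNReal.toReal_mul, ENNReal.toReal_ofReal (by positivity)]

theorem sectorDensity_add_le {B B' : Set ℂ} {c r : ℝ} (hc : 0 ≤ c) (hr : 0 < r)
    (h : volume (B ∩ sectorBall α (r + c)) ≤
      volume (B' ∩ sectorBall α r) + (volume (sectorBall α (r + c)) - volume (sectorBall α r))) :
    sectorDensity α B (r + c) ≤ sectorDensity α B' r + (1 - (r / (r + c)) ^ 2) := by
  have hrc : 0 < r + c := by linarith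
  set V := (volume (sectorBall α 1)).toReal
  set N := (volume (B ∩ sectorBall α (r + c))).toReal
  set N' := (volume (B' ∩ sectorBall α r)).toReal
  have hN : N ≤ N' + ((r + c) ^ 2 * V - r ^ 2 * V) := by
    have hfin := volume_sectorBall_lt_top α
    have hle : volume (sectorBall α r) ≤ volume (sectorBall α (r + c)) :=
      measure_mono (sectorBall_mono α (by linarith))
    have hN'fin : volume (B' ∩ sectorBall α r) ≠ ⊤ :=
      ((measure_mono inter_subset_right).trans_lt (hfin r)).ne
    have hdiff_fin : volume (sectorBall α (r + c)) - volume (sectorBall α r) ≠ ⊤ :=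
      (tsub_le_self.trans_lt (hfin _)).ne
    have := ENNReal.toReal_mono (ENNReal.add_ne_top.2 ⟨hN'fin, hdiff_fin⟩) h
    rwa [ENNReal.toReal_add hN'fin hdiff_fin, ENNReal.toReal_sub_of_le hle (hfin _).ne,
      toReal_volume_sectorBall α hr, toReal_volume_sectorBall α hrc] at this
  have hp : (r / (r + c)) ^ 2 ≤ 1 := pow_le_one₀ (by positivity) ((div_le_one hrc).2 (by linarith))
  unfold sectorDensity
  rw [toReal_volume_sectorBall α hr, toReal_volume_sectorBall α hrc]
  rcases (ENNReal.toReal_nonneg : 0 ≤ V).eq_or_lt with hV | hV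
  · rw [← hV, mul_zero, mul_zero, div_zero, div_zero]
    linarith
  have hV' : V ≠ 0 := hV.ne'
  calc N / ((r + c) ^ 2 * V) ≤ (N' + ((r + c) ^ 2 * V - r ^ 2 * V)) / ((r + c) ^ 2 * V) := by
        gcongr
    _ = N' / ((r + c) ^ 2 * V) + (1 - (r / (r + c)) ^ 2) := by field_simp
    _ ≤ N' / (r ^ 2 * V) + (1 - (r / (r + c)) ^ 2) := by gcongr; linarith

theorem Filter.limsup_le_limsup_of_le_add_tendsto_zero {ι : Type*} {f : Filter ι} [f.NeBot]
    {u v e : ι → ℝ} (hu : IsCoboundedUnder (· ≤ ·) f u) (hv : IsBoundedUnder (· ≤ ·) f v)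
    (hv' : IsBoundedUnder (· ≥ ·) f v) (he : Tendsto e f (𝓝 0)) (h : u ≤ᶠ[f] v + e) :
    limsup u f ≤ limsup v f :=
  calc limsup u f ≤ limsup (v + e) f :=
        limsup_le_limsup h hu (isBoundedUnder_le_add hv he.isBoundedUnder_le)
    _ ≤ limsup v f + limsup e f :=
        limsup_add_le hv' hv he.isCoboundedUnder_le he.isBoundedUnder_le
    _ = limsup v f := by rw [he.limsup_eq, add_zero]

theorem tendsto_one_sub_div_add_sq (c : ℝ) :
    Tendsto (fun r : ℝ => 1 - (r / (r + c)) ^ 2) atTop (𝓝 0) := by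
  have hc : Tendsto (fun r : ℝ => c / (r + c)) atTop (𝓝 0) :=
    tendsto_const_nhds.div_atTop (tendsto_atTop_add_const_right _ c tendsto_id)
  have : Tendsto (fun r : ℝ => 1 - (1 - c / (r + c)) ^ 2) atTop (𝓝 0) := by
    simpa using (tendsto_const_nhds (x := (1 : ℝ))).sub
      ((tendsto_const_nhds (x := (1 : ℝ))).sub hc |>.pow 2)
  refine this.congr' ?_
  filter_upwards [eventually_gt_atTop (-c)] with r hr
  rw [one_sub_div (by linarith), add_sub_cancel_right]

theorem udens_preimage_add_inter_sector (hα : α ≤ Real.pi / 2) {t₀ : ℂ} (ht₀ : t₀ ∈ sector α)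
    {B : Set ℂ} (hB : udens α B = 1) : udens α ((· + t₀) ⁻¹' B ∩ sector α) = 1 := by
  refine (udens_le_one _).antisymm ?_
  have hshift : udens α B = limsup (fun r => sectorDensity α B (r + ‖t₀‖)) atTop := by
    rw [← Function.comp_def, limsup_comp, map_add_atTop_eq]
    rfl
  rw [← hB, hshift]
  refine limsup_le_limsup_of_le_add_tendsto_zero
    (isCoboundedUnder_le_of_le atTop fun r => sectorDensity_nonneg B _)
    (isBoundedUnder_of_eventually_le (Eventually.of_forall (sectorDensity_le_one _)))
    (isBoundedUnder_of_eventually_ge (Eventually.of_forall (sectorDensity_nonneg _)))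
    (tendsto_one_sub_div_add_sq ‖t₀‖) ?_
  filter_upwards [eventually_gt_atTop 0] with r hr
  exact sectorDensity_add_le (norm_nonneg t₀) hr (volume_inter_sectorBall_le hα ht₀ B r)

theorem eventually_mem_alongAbs (A : Set ℂ) : ∀ᶠ t in alongAbs A, t ∈ A :=
  mem_inf_of_right (mem_principal_self A)

theorem tendsto_add_const_alongAbs (B C : Set ℂ) (t₀ : ℂ) :
    Tendsto (· + t₀) (alongAbs ((· + t₀) ⁻¹' B ∩ C)) (alongAbs B) := by
  unfold alongAbs
  rw [comap_norm_atTop]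
  exact (tendsto_add_const_cobounded t₀).inf (tendsto_principal_principal.2 fun _ hz => hz.1)

namespace CZeroSemigroup

theorem T_add_apply (S : CZeroSemigroup α 𝕜 X) {s t : ℂ} (hs : s ∈ sector α) (ht : t ∈ sector α)
    (x : X) : S.T (s + t) x = S.T s (S.T t x) := by
  rw [S.map_add' s hs t ht, ContinuousLinearMap.comp_apply]

theorem T_comm_apply (S : CZeroSemigroup α 𝕜 X) {s t : ℂ} (hs : s ∈ sector α) (ht : t ∈ sector α)
    (x : X) : S.T s (S.T t x) = S.T t (S.T s x) := by
  rw [← S.T_add_apply hs ht, add_comm, S.T_add_apply ht hs]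

end CZeroSemigroup

theorem stmt_6_general (α : ℝ) (hα' : α < Real.pi / 2)
    {𝕜 X : Type*} [NontriviallyNormedField 𝕜] [NormedAddCommGroup X] [NormedSpace 𝕜 X]
    (S : CZeroSemigroup α 𝕜 X)
    (x₀ : X) (hx₀ : DistIrregular S x₀) :
    ∀ t₀ ∈ sector α, DistIrregular S (S.T t₀ x₀) := by
  intro t₀ ht₀
  obtain ⟨A, B, hAα, -, hA, hB, hAdens, hBdens, hA0, hBtop⟩ := hx₀
  refine ⟨A, (· + t₀) ⁻¹' B ∩ sector α, hAα, inter_subset_right, hA,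
    (hB.preimage (measurable_add_const t₀)).inter (measurableSet_sector α), hAdens,
    udens_preimage_add_inter_sector hα'.le ht₀ hBdens, ?_, ?_⟩
  · have hA0' : Tendsto (fun t => ‖S.T t₀ (S.T t x₀)‖) (alongAbs A) (𝓝 0) :=
      squeeze_zero (fun _ => norm_nonneg _) (fun t => (S.T t₀).le_opNorm _)
        (by simpa using hA0.const_mul ‖S.T t₀‖)
    refine hA0'.congr' ?_
    filter_upwards [eventually_mem_alongAbs A] with t ht
    rw [S.T_comm_apply (hAα ht) ht₀]
  · refine (hBtop.comp (tendsto_add_const_alongAbs B (sector α) t₀)).congr' ?_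
    filter_upwards [eventually_mem_alongAbs _] with s hs
    rw [Function.comp_apply, S.T_add_apply hs.2 ht₀]

/-- The set of distributionally irregular vectors is invariant under the semigroup. -/
theorem stmt_6 (α : ℝ) (hα : 0 < α) (hα' : α < Real.pi / 2)
    {𝕜 X : Type*} [NontriviallyNormedField 𝕜] [NormedAddCommGroup X] [NormedSpace 𝕜 X]
    [CompleteSpace X] (S : CZeroSemigroup α 𝕜 X)
    (x₀ : X) (hx₀ : DistIrregular S x₀) :
    ∀ t₀ ∈ sector α, DistIrregular S (S.T t₀ x₀) :=
  stmt_6_general α hα' S x₀ hx₀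
end
end
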